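/- arXiv:2508.05278 — 2 statements merged into one kernel-verified Lean document; each statement's English description precedes it below -/
import Mathlib

section
/- Let A be an n×n real symmetric matrix with eigenvalues (λ_i)_{i∈Fin n} given by the spectral theorem, and let s be a subset of the index set Fin n with |s| = k. Then there exists an n×n real matrix B with rank(B) ≤ k such that the squared Frobenius distance satisfies Σ_{i,j} (A − B)_{ij}² = Σ_{i ∉ s} λ_i². -/
/-!
Diagonalise `A = U Λ Uᵀ` with `U` orthogonal and take `B = U Λ_s Uᵀ`, keeping only the
eigenvalues indexed by `s`. Then `A - B = U Λ_{sᶜ} Uᵀ`, and conjugation by an orthogonal matrix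
preserves the sum of squared entries, `trace (Mᵀ M)`.
-/

open Matrix

namespace Matrix

variable {m n R : Type*} [Fintype m] [Fintype n]

theorem trace_transpose_mul_self [CommSemiring R] (M : Matrix m n R) :
    trace (Mᵀ * M) = ∑ i, ∑ j, M i j ^ 2 := by
  simp only [trace, diag_apply, mul_apply, transpose_apply, sq]
  exact Finset.sum_comm

theorem rank_diagonal_le_card [Field R] [DecidableEq n] {w : n → R} (s : Finset n)
    (hw : ∀ i ∉ s, w i = 0) : (diagonal w).rank ≤ s.card := by
  classical
  rw [rank_diagonal, Fintype.card_subtype]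
  exact Finset.card_le_card fun i hi => by
    by_contra his
    exact (Finset.mem_filter.mp hi).2 (hw i his)

theorem sum_sq_mul_diagonal_mul_transpose [CommSemiring R] [DecidableEq n] {U : Matrix n n R}
    (hU : Uᵀ * U = 1) (e : n → R) :
    ∑ i, ∑ j, (U * diagonal e * Uᵀ) i j ^ 2 = ∑ i, e i ^ 2 := by
  have hsymm : (U * diagonal e * Uᵀ)ᵀ = U * diagonal e * Uᵀ := by
    simp only [transpose_mul, transpose_transpose, diagonal_transpose, mul_assoc]
  have hsq : (U * diagonal e * Uᵀ) * (U * diagonal e * Uᵀ) =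
      U * diagonal (fun i => e i * e i) * Uᵀ := by
    calc (U * diagonal e * Uᵀ) * (U * diagonal e * Uᵀ)
        = U * diagonal e * (Uᵀ * U) * diagonal e * Uᵀ := by simp only [mul_assoc]
      _ = U * diagonal (fun i => e i * e i) * Uᵀ := by
        rw [hU, mul_one, mul_assoc U, diagonal_mul_diagonal]
  rw [← trace_transpose_mul_self, hsymm, hsq, trace_mul_cycle, hU, one_mul, trace_diagonal]
  simp only [sq]

theorem IsHermitian.eq_mul_diagonal_eigenvalues_mul_transpose [DecidableEq n]
    {A : Matrix n n ℝ} (hA : A.IsHermitian) :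
    A = (hA.eigenvectorUnitary : Matrix n n ℝ) * diagonal hA.eigenvalues *
      (hA.eigenvectorUnitary : Matrix n n ℝ)ᵀ := by
  conv_lhs => rw [hA.spectral_theorem]
  simp [Unitary.conjStarAlgAut_apply, star_eq_conjTranspose,
    conjTranspose_eq_transpose_of_trivial]

theorem IsHermitian.transpose_eigenvectorUnitary_mul_self [DecidableEq n]
    {A : Matrix n n ℝ} (hA : A.IsHermitian) :
    (hA.eigenvectorUnitary : Matrix n n ℝ)ᵀ * hA.eigenvectorUnitary = 1 := by
  simpa [star_eq_conjTranspose, conjTranspose_eq_transpose_of_trivial] using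
    Unitary.coe_star_mul_self hA.eigenvectorUnitary

end Matrix

/-- Eigenvalue truncation: for a real symmetric matrix `A` with eigenvalues `λ_i`
and any index set `s` of cardinality `k`, there is a matrix `B` of rank at most `k`
whose squared Frobenius distance to `A` is `∑_{i ∉ s} λ_i²`. -/
theorem stmt_6 (n k : ℕ) (A : Matrix (Fin n) (Fin n) ℝ) (hA : A.IsHermitian)
    (s : Finset (Fin n)) (hs : s.card = k) :
    ∃ B : Matrix (Fin n) (Fin n) ℝ, B.rank ≤ k ∧
      (∑ i, ∑ j, ((A - B) i j) ^ 2) = ∑ i ∈ sᶜ, (hA.eigenvalues i) ^ 2 := by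
  set U : Matrix (Fin n) (Fin n) ℝ := ↑hA.eigenvectorUnitary
  set kept : Fin n → ℝ := fun i => if i ∈ s then hA.eigenvalues i else 0
  set dropped : Fin n → ℝ := fun i => if i ∈ sᶜ then hA.eigenvalues i else 0
  refine ⟨U * diagonal kept * Uᵀ, ?_, ?_⟩
  · calc (U * diagonal kept * Uᵀ).rank ≤ (diagonal kept).rank :=
          (rank_mul_le_left _ _).trans (rank_mul_le_right _ _)
      _ ≤ k := hs ▸ rank_diagonal_le_card s fun i hi => if_neg hi
  · have hsplit : A - U * diagonal kept * Uᵀ = U * diagonal dropped * Uᵀ := by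
      have heigen : hA.eigenvalues = fun i => kept i + dropped i := by
        ext i; by_cases hi : i ∈ s <;> simp [kept, dropped, hi]
      rw [sub_eq_iff_eq_add', ← add_mul, ← mul_add, diagonal_add, ← heigen]
      exact hA.eq_mul_diagonal_eigenvalues_mul_transpose
    rw [hsplit, sum_sq_mul_diagonal_mul_transpose hA.transpose_eigenvectorUnitary_mul_self]
    simp only [dropped, ite_pow, zero_pow two_ne_zero, Finset.sum_ite_mem, Finset.univ_inter]
end

section
/- Let K be an n×n real positive semidefinite matrix, λ > 0, Σ = λ·K + Iₙ, X an n×p real matrix, and y ∈ ℝⁿ; assume G = Xᵀ Σ⁻¹ X is invertible and let β̂ = G⁻¹ Xᵀ Σ⁻¹ y. Let (K_m)_{m∈ℕ} be a sequence of n×n real positive semidefinite matrices converging entrywise to K, set Σ_m = λ·K_m + Iₙ, and (for m large enough that G_m = Xᵀ Σ_m⁻¹ X is invertible) β̃_m = G_m⁻¹ Xᵀ Σ_m⁻¹ y. Define D_m = (1/2)·( trace(Σ⁻¹ Σ_m) − n + (X β̂ − X β̃_m)ᵀ Σ⁻¹ (X β̂ − X β̃_m) + log(det Σ) − log(det Σ_m)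 ). Then D_m → 0 as m → ∞. -/
open Matrix Filter Topology

/-!
The GLS estimator and the closed-form Gaussian KL divergence are continuous functions of the
covariance matrix wherever the matrices being inverted are nonsingular, and the divergence
vanishes on the diagonal. Since `Σ = λK + I` is positive definite and `G` is invertible, both
are continuous at `Σ`, so `Σ_m → Σ` forces `β̃_m → β̂` and `D_m → D_KL(N(Xβ̂, Σ) ‖ N(Xβ̂, Σ)) = 0`.
-/

section Inverse

variable {n R : Type*} [Fintype n] [DecidableEq n] [Field R] [TopologicalSpace R]
  [IsTopologicalRing R] [ContinuousInv₀ R]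

lemma continuousAt_matrix_inv_of_det_ne_zero {A : Matrix n n R} (hA : A.det ≠ 0) :
    ContinuousAt Inv.inv A :=
  continuousAt_matrix_inv A (by simpa only [Ring.inverse_eq_inv'] using continuousAt_inv₀ hA)

end Inverse

section LinearMixedModel

variable {ι κ : Type*} [Fintype ι] [DecidableEq ι] [Fintype κ] [DecidableEq κ]

noncomputable def glsEstimator (X : Matrix ι κ ℝ) (S : Matrix ι ι ℝ) (y : ι → ℝ) : κ → ℝ :=
  (Xᵀ * S⁻¹ * X)⁻¹ *ᵥ (Xᵀ *ᵥ (S⁻¹ *ᵥ y))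

lemma continuousAt_glsEstimator (X : Matrix ι κ ℝ) (y : ι → ℝ) {S : Matrix ι ι ℝ}
    (hS : S.det ≠ 0) (hG : (Xᵀ * S⁻¹ * X).det ≠ 0) :
    ContinuousAt (fun S' => glsEstimator X S' y) S := by
  have hSinv : ContinuousAt (fun S' : Matrix ι ι ℝ => S'⁻¹) S :=
    continuousAt_matrix_inv_of_det_ne_zero hS
  have hGram : ContinuousAt (fun S' : Matrix ι ι ℝ => Xᵀ * S'⁻¹ * X) S :=
    ContinuousAt.comp (g := fun A => Xᵀ * A * X)
      ((continuous_const.matrix_mul continuous_id).matrix_mul continuous_const).continuousAt hSinv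
  have hGramInv : ContinuousAt (fun S' : Matrix ι ι ℝ => (Xᵀ * S'⁻¹ * X)⁻¹) S :=
    ContinuousAt.comp (g := Inv.inv) (continuousAt_matrix_inv_of_det_ne_zero hG) hGram
  have hrhs : ContinuousAt (fun S' : Matrix ι ι ℝ => Xᵀ *ᵥ (S'⁻¹ *ᵥ y)) S :=
    ContinuousAt.comp (g := fun A => Xᵀ *ᵥ (A *ᵥ y))
      (continuous_const.matrix_mulVec (continuous_id.matrix_mulVec continuous_const)).continuousAt
      hSinv
  exact ContinuousAt.comp (g := fun q : Matrix κ κ ℝ × (κ → ℝ) => q.1 *ᵥ q.2)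
    (continuous_fst.matrix_mulVec continuous_snd).continuousAt (hGramInv.prodMk hrhs)

/-- `gaussianKL μ₁ S₁ μ₂ S₂` is `D_KL(N(μ₁, S₁) ‖ N(μ₂, S₂))`. -/
noncomputable def gaussianKL (μ₁ : ι → ℝ) (S₁ : Matrix ι ι ℝ) (μ₂ : ι → ℝ)
    (S₂ : Matrix ι ι ℝ) : ℝ :=
  (1 / 2) * ((S₂⁻¹ * S₁).trace - Fintype.card ι + (μ₂ - μ₁) ⬝ᵥ (S₂⁻¹ *ᵥ (μ₂ - μ₁)) +
    Real.log S₂.det - Real.log S₁.det)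

lemma gaussianKL_self (μ : ι → ℝ) {S : Matrix ι ι ℝ} (hS : S.det ≠ 0) :
    gaussianKL μ S μ S = 0 := by
  simp [gaussianKL, nonsing_inv_mul S hS.isUnit]

lemma continuousAt_gaussianKL (μ₂ : ι → ℝ) (S₂ : Matrix ι ι ℝ) {μ₁ : ι → ℝ}
    {S₁ : Matrix ι ι ℝ} (hS₁ : S₁.det ≠ 0) :
    ContinuousAt (fun q : (ι → ℝ) × Matrix ι ι ℝ => gaussianKL q.1 q.2 μ₂ S₂) (μ₁, S₁) := by
  have hdiff : Continuous fun q : (ι → ℝ) × Matrix ι ι ℝ => μ₂ - q.1 :=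
    continuous_const.sub continuous_fst
  have hlogdet : ContinuousAt (fun q : (ι → ℝ) × Matrix ι ι ℝ => Real.log q.2.det) (μ₁, S₁) :=
    continuous_snd.matrix_det.continuousAt.log hS₁
  refine continuousAt_const.mul (ContinuousAt.sub (Continuous.continuousAt ?_) hlogdet)
  exact ((((continuous_const.matrix_mul continuous_snd).matrix_trace.sub continuous_const).add
    (hdiff.dotProduct (continuous_const.matrix_mulVec hdiff))).add continuous_const)

end LinearMixedModel

theorem stmt_14_general (n p : ℕ)
    (K : Matrix (Fin n) (Fin n) ℝ) (hK : K.PosSemidef)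
    (lam : ℝ) (hlam : 0 < lam)
    (X : Matrix (Fin n) (Fin p) ℝ) (y : Fin n → ℝ)
    (hG : IsUnit (Xᵀ * (lam • K + 1)⁻¹ * X))
    (betaHat : Fin p → ℝ)
    (hbetaHat : betaHat =
      (Xᵀ * (lam • K + 1)⁻¹ * X)⁻¹ *ᵥ (Xᵀ *ᵥ ((lam • K + 1)⁻¹ *ᵥ y)))
    (Km : ℕ → Matrix (Fin n) (Fin n) ℝ)
    (hconv : ∀ i j, Tendsto (fun m => Km m i j) atTop (𝓝 (K i j)))
    (betaM : ℕ → Fin p → ℝ)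
    (hbetaM : ∀ m, betaM m =
      (Xᵀ * (lam • Km m + 1)⁻¹ * X)⁻¹ *ᵥ (Xᵀ *ᵥ ((lam • Km m + 1)⁻¹ *ᵥ y)))
    (D : ℕ → ℝ)
    (hD : ∀ m, D m = (1 / 2) *
      (((lam • K + 1)⁻¹ * (lam • Km m + 1)).trace - (n : ℝ) +
        (X *ᵥ betaHat - X *ᵥ betaM m) ⬝ᵥ
          ((lam • K + 1)⁻¹ *ᵥ (X *ᵥ betaHat - X *ᵥ betaM m)) +
        Real.log (lam • K + 1).det - Real.log (lam • Km m + 1).det)) :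
    Tendsto D atTop (𝓝 0) := by
  have hdet : (lam • K + 1).det ≠ 0 :=
    (PosDef.posSemidef_add (hK.smul hlam.le) PosDef.one).det_pos.ne'
  have hSigma : Tendsto (fun m => lam • Km m + 1) atTop (𝓝 (lam • K + 1)) :=
    ((tendsto_pi_nhds.2 fun i => tendsto_pi_nhds.2 (hconv i)).const_smul lam).add
      tendsto_const_nhds
  have hbeta : Tendsto betaM atTop (𝓝 betaHat) := by
    have := (continuousAt_glsEstimator X y hdet
      ((isUnit_iff_isUnit_det _).mp hG).ne_zero).tendsto.comp hSigma
    simpa only [glsEstimator, Function.comp_def, hbetaHat, funext hbetaM] using this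
  have hmean : Tendsto (fun m => X *ᵥ betaM m) atTop (𝓝 (X *ᵥ betaHat)) :=
    ((continuous_const.matrix_mulVec continuous_id).tendsto _).comp hbeta
  have hKL := (continuousAt_gaussianKL (X *ᵥ betaHat) (lam • K + 1) hdet).tendsto.comp
    (hmean.prodMk_nhds hSigma)
  rw [gaussianKL_self _ hdet] at hKL
  convert hKL using 1
  funext m
  simp only [Function.comp_apply, hD m, gaussianKL, Fintype.card_fin]

/-- Proposition 2 (KL convergence of NExt-LMM): if the approximated GSMs `K_m`
converge entrywise to `K`, then the closed-form Gaussian KL divergence `D_m`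
between `N(Xβ̃_m, Σ_m)` and `N(Xβ̂, Σ)` tends to `0`. -/
theorem stmt_14 (n p : ℕ)
    (K : Matrix (Fin n) (Fin n) ℝ) (hK : K.PosSemidef)
    (lam : ℝ) (hlam : 0 < lam)
    (X : Matrix (Fin n) (Fin p) ℝ) (y : Fin n → ℝ)
    (hG : IsUnit (Xᵀ * (lam • K + 1)⁻¹ * X))
    (betaHat : Fin p → ℝ)
    (hbetaHat : betaHat =
      (Xᵀ * (lam • K + 1)⁻¹ * X)⁻¹ *ᵥ (Xᵀ *ᵥ ((lam • K + 1)⁻¹ *ᵥ y)))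
    (Km : ℕ → Matrix (Fin n) (Fin n) ℝ) (hKm : ∀ m, (Km m).PosSemidef)
    (hconv : ∀ i j, Tendsto (fun m => Km m i j) atTop (𝓝 (K i j)))
    (betaM : ℕ → Fin p → ℝ)
    (hbetaM : ∀ m, betaM m =
      (Xᵀ * (lam • Km m + 1)⁻¹ * X)⁻¹ *ᵥ (Xᵀ *ᵥ ((lam • Km m + 1)⁻¹ *ᵥ y)))
    (D : ℕ → ℝ)
    (hD : ∀ m, D m = (1 / 2) *
      (((lam • K + 1)⁻¹ * (lam • Km m + 1)).trace - (n : ℝ) +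
        (X *ᵥ betaHat - X *ᵥ betaM m) ⬝ᵥ
          ((lam • K + 1)⁻¹ *ᵥ (X *ᵥ betaHat - X *ᵥ betaM m)) +
        Real.log (lam • K + 1).det - Real.log (lam • Km m + 1).det)) :
    Tendsto D atTop (𝓝 0) :=
  stmt_14_general n p K hK lam hlam X y hG betaHat hbetaHat Km hconv betaM hbetaM D hD
end
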